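/- arXiv:2111.04979 — 3 statements merged into one kernel-verified Lean document; each statement's English description precedes it below -/
import Mathlib

section
/- Willems' fundamental lemma (state-space form): Suppose the pair (A,B) is controllable, i.e., the controllability matrix [B, AB, ..., A^{n-1}B] has rank n. Let u^d(0),...,u^d(N-1) in R^m and y^d(0),...,y^d(N-1) in R^p be an input/output trajectory of the system x(t+1)=Ax(t)+Bu(t), y(t)=Cx(t)+Du(t) (i.e., there exists a state sequence x^d with x^d(t+1)=Ax^d(t)+Bu^d(t) and y^d(t)=Cx^d(t)+Du^d(t) for all 0 <= t <= N-2 resp. N-1), and suppose u^d is persistently exciting of order L+n. Then a pair of sequences ubar(0),...,ubar(L-1) in R^m and ybar(0),...,ybar(L-1) in R^p is an input/output trajectory of the same system if and only if there exists alpha in R^{N-L+1} such that for all k in {0,...,L-1}: ubar(k) = sum_{i=0}^{N-L} alpha_i u^d(k+i) and ybar(k) = sum_{i=0}^{N-L} alpha_i y^d(k+i). -/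
open Matrix BigOperators


lemma left_ker_of_full_row_rank {R C : Type*} [Fintype R] [Fintype C]
    (M : Matrix R C ℝ) (h : M.rank = Fintype.card R)
    (v : R → ℝ) (hv : v ᵥ* M = 0) : v = 0 := by
  have hrt : Mᵀ.rank = Fintype.card R := by rw [Matrix.rank_transpose]; exact h
  have hker : LinearMap.ker Mᵀ.mulVecLin = ⊥ := by
    have h1 := LinearMap.finrank_range_add_finrank_ker Mᵀ.mulVecLin
    rw [show Module.finrank ℝ (LinearMap.range Mᵀ.mulVecLin) = Mᵀ.rank from rfl,
      hrt, Module.finrank_pi] at h1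
    have : Module.finrank ℝ (LinearMap.ker Mᵀ.mulVecLin) = 0 := by omega
    exact Submodule.finrank_eq_zero.mp this
  have : Mᵀ.mulVecLin v = 0 := by
    rw [Matrix.mulVecLin_apply, Matrix.mulVec_transpose]; exact hv
  simpa using LinearMap.ker_eq_bot.mp hker |>.eq_iff.mp (by simpa using this)

lemma surj_of_trivial_left_ker {R C : Type*} [Fintype R] [Fintype C]
    (M : Matrix R C ℝ) (h : ∀ v : R → ℝ, v ᵥ* M = 0 → v = 0)
    (y : R → ℝ) : ∃ x : C → ℝ, M.mulVec x = y := by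
  have hinj : Function.Injective Mᵀ.mulVecLin := by
    rw [← LinearMap.ker_eq_bot]
    rw [LinearMap.ker_eq_bot']
    intro v hv
    exact h v (by rw [← Matrix.mulVec_transpose]; exact hv)
  have hrt : Mᵀ.rank = Fintype.card R := by
    rw [Matrix.rank, LinearMap.finrank_range_of_inj hinj, Module.finrank_pi]
  have hr : M.rank = Fintype.card R := by rw [← Matrix.rank_transpose]; exact hrt
  have htop : LinearMap.range M.mulVecLin = ⊤ := by
    apply Submodule.eq_top_of_finrank_eq
    rw [show Module.finrank ℝ (LinearMap.range M.mulVecLin) = M.rank from rfl, hr,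
      Module.finrank_pi]
  obtain ⟨x, hx⟩ := (LinearMap.range_eq_top.mp htop) y
  exact ⟨x, hx⟩


lemma dotProduct_finset_sum {q : Type*} [Fintype q] {ι : Type*} (S : Finset ι)
    (u : q → ℝ) (f : ι → q → ℝ) : u ⬝ᵥ (∑ s ∈ S, f s) = ∑ s ∈ S, u ⬝ᵥ f s := by
  simp only [dotProduct, Finset.sum_apply, Finset.mul_sum]
  exact Finset.sum_comm

lemma finset_sum_dotProduct {q : Type*} [Fintype q] {ι : Type*} (S : Finset ι)
    (u : q → ℝ) (f : ι → q → ℝ) : (∑ s ∈ S, f s) ⬝ᵥ u = ∑ s ∈ S, f s ⬝ᵥ u := by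
  simp only [dotProduct, Finset.sum_apply, Finset.sum_mul]
  exact Finset.sum_comm


lemma state_prop {n m N : ℕ} (A : Matrix (Fin n) (Fin n) ℝ) (B : Matrix (Fin n) (Fin m) ℝ)
    (ud : ℕ → Fin m → ℝ) (xd : ℕ → Fin n → ℝ)
    (hx : ∀ t, t + 1 < N → xd (t + 1) = A.mulVec (xd t) + B.mulVec (ud t)) :
    ∀ j i, i + j < N → xd (i + j) = (A ^ j).mulVec (xd i)
      + ∑ s ∈ Finset.range j, ((A ^ (j - 1 - s)) * B).mulVec (ud (i + s)) := by
  intro j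
  induction j with
  | zero => intro i _; simp
  | succ j ih =>
    intro i hij
    have h1 : i + j + 1 < N := by omega
    rw [show i + (j+1) = (i + j) + 1 by omega, hx (i+j) h1, ih i (by omega)]
    rw [Finset.sum_range_succ, Matrix.mulVec_add]
    have hA : ∀ v : Fin n → ℝ, A.mulVec ((A ^ j).mulVec v) = (A ^ (j+1)).mulVec v := by
      intro v; rw [Matrix.mulVec_mulVec, ← pow_succ']
    rw [hA]
    have hsum : A.mulVec (∑ s ∈ Finset.range j, ((A ^ (j - 1 - s)) * B).mulVec (ud (i + s)))
        = ∑ s ∈ Finset.range j, ((A ^ (j + 1 - 1 - s)) * B).mulVec (ud (i + s)) := by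
      rw [show A.mulVec (∑ s ∈ Finset.range j, ((A ^ (j - 1 - s)) * B).mulVec (ud (i + s)))
        = A.mulVecLin (∑ s ∈ Finset.range j, ((A ^ (j - 1 - s)) * B).mulVec (ud (i + s))) from rfl,
        map_sum]
      refine Finset.sum_congr rfl fun s hs => ?_
      have hs' : s < j := Finset.mem_range.mp hs
      rw [Matrix.mulVecLin_apply, Matrix.mulVec_mulVec, ← Matrix.mul_assoc, ← pow_succ',
        show j - 1 - s + 1 = j + 1 - 1 - s by omega]
    rw [hsum]
    have : (A ^ (j + 1 - 1 - j)) * B = B := by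
      rw [show j + 1 - 1 - j = 0 by omega, pow_zero, Matrix.one_mul]
    rw [this]
    abel

lemma ch_sum {n : ℕ} (A : Matrix (Fin n) (Fin n) ℝ) :
    (∑ j ∈ Finset.range (n + 1), (A.charpoly.coeff j) • A ^ j = 0) ∧ A.charpoly.coeff n = 1 := by
  have hdeg : A.charpoly.natDegree = n := by
    rw [Matrix.charpoly_natDegree_eq_dim, Fintype.card_fin]
  constructor
  · have h0 := Matrix.aeval_self_charpoly A
    rw [A.charpoly.as_sum_range' (n+1) (by omega), map_sum] at h0
    convert h0 using 2 with j hj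
    rw [Polynomial.aeval_monomial, Algebra.smul_def]
  · have := A.charpoly_monic.coeff_natDegree
    rwa [hdeg] at this

lemma finset_sum_mulVec {R C ι : Type*} [Fintype C] (S : Finset ι)
    (M : ι → Matrix R C ℝ) (x : C → ℝ) :
    (∑ j ∈ S, M j) *ᵥ x = ∑ j ∈ S, (M j) *ᵥ x := by
  ext i
  simp only [Matrix.mulVec, dotProduct, Finset.sum_apply, Matrix.sum_apply, Finset.sum_mul]
  rw [Finset.sum_comm]

lemma key_kernel {n m N L : ℕ} (hL : 1 ≤ L) (hLN : L + n ≤ N)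
    (A : Matrix (Fin n) (Fin n) ℝ) (B : Matrix (Fin n) (Fin m) ℝ)
    (ud : ℕ → Fin m → ℝ) (xd : ℕ → Fin n → ℝ)
    (hx : ∀ t, t + 1 < N → xd (t + 1) = A.mulVec (xd t) + B.mulVec (ud t))
    (hctrb : ∀ η : Fin n → ℝ, (∀ j : ℕ, j < n → η ᵥ* (A ^ j * B) = 0) → η = 0)
    (hPEker : ∀ w : ℕ → Fin m → ℝ,
       (∀ i : ℕ, i ≤ N - (L + n) → ∑ t ∈ Finset.range (L + n), w t ⬝ᵥ ud (i + t) = 0) →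
       ∀ t, t < L + n → w t = 0)
    (ξ : ℕ → Fin m → ℝ) (η : Fin n → ℝ)
    (hker : ∀ i : ℕ, i ≤ N - L →
      (∑ k ∈ Finset.range L, ξ k ⬝ᵥ ud (i + k)) + η ⬝ᵥ xd i = 0) :
    (∀ k, k < L → ξ k = 0) ∧ η = 0 := by
  set c : ℕ → ℝ := fun j => A.charpoly.coeff j with hc
  set ζ : ℕ → ℕ → Fin m → ℝ := fun j t =>
    if t < j then η ᵥ* (A ^ (j - 1 - t) * B)
    else if t < j + L then ξ (t - j) else 0 with hζ
  -- Step 1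
  have hstep1 : ∀ j, j ≤ n → ∀ i, i ≤ N - (L + n) →
      (∑ t ∈ Finset.range (L + n), ζ j t ⬝ᵥ ud (i + t)) + (η ᵥ* A ^ j) ⬝ᵥ xd i = 0 := by
    intro j hj i hi
    have hiNL : i + j ≤ N - L := by omega
    have hF := hker (i + j) hiNL
    have hxprop := state_prop A B ud xd hx j i (by omega)
    have hηx : η ⬝ᵥ xd (i + j) = (η ᵥ* A ^ j) ⬝ᵥ xd i
        + ∑ s ∈ Finset.range j, (η ᵥ* (A ^ (j - 1 - s) * B)) ⬝ᵥ ud (i + s) := by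
      rw [hxprop, dotProduct_add, dotProduct_finset_sum]
      congr 1
      · rw [dotProduct_mulVec]
      · exact Finset.sum_congr rfl fun s _ => by rw [dotProduct_mulVec]
    have hζsum : (∑ t ∈ Finset.range (L + n), ζ j t ⬝ᵥ ud (i + t))
        = (∑ s ∈ Finset.range j, (η ᵥ* (A ^ (j - 1 - s) * B)) ⬝ᵥ ud (i + s))
          + ∑ k ∈ Finset.range L, ξ k ⬝ᵥ ud (i + j + k) := by
      have h1 : (∑ t ∈ Finset.range (L + n), ζ j t ⬝ᵥ ud (i + t))
          = ∑ t ∈ Finset.range (j + L), ζ j t ⬝ᵥ ud (i + t) := by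
        symm
        apply Finset.sum_subset
        · intro t ht
          simp only [Finset.mem_range] at *
          omega
        · intro t _ ht
          have hcond : ¬ t < j ∧ ¬ t < j + L := by
            simp only [Finset.mem_range] at ht
            constructor <;> omega
          rw [hζ]
          simp only [if_neg hcond.1, if_neg hcond.2]
          exact zero_dotProduct _
      rw [h1, Finset.sum_range_add]
      congr 1
      · exact Finset.sum_congr rfl fun t ht => by
          have htj : t < j := Finset.mem_range.mp ht
          rw [hζ]; simp only [if_pos htj]
      · refine Finset.sum_congr rfl fun k hk => ?_
        have hkL : k < L := Finset.mem_range.mp hk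
        rw [hζ]
        simp only []
        rw [if_neg (show ¬ (j + k < j) by omega), if_pos (show j + k < j + L by omega),
          show j + k - j = k by omega, show i + (j + k) = i + j + k by omega]
    rw [hζsum]
    rw [hηx] at hF
    linarith
  -- Step 2
  set w : ℕ → Fin m → ℝ := fun t => ∑ j ∈ Finset.range (n + 1), c j • ζ j t with hw
  have hwzero : ∀ t, t < L + n → w t = 0 := by
    apply hPEker
    intro i hi
    have hcalc : ∑ t ∈ Finset.range (L + n), w t ⬝ᵥ ud (i + t)
        = ∑ j ∈ Finset.range (n + 1), c j *
            (∑ t ∈ Finset.range (L + n), ζ j t ⬝ᵥ ud (i + t)) := by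
      have hterm : ∀ t, w t ⬝ᵥ ud (i + t)
          = ∑ j ∈ Finset.range (n + 1), c j * (ζ j t ⬝ᵥ ud (i + t)) := by
        intro t
        rw [hw]
        rw [finset_sum_dotProduct]
        exact Finset.sum_congr rfl fun j _ => smul_dotProduct _ _ _
      simp only [hterm]
      rw [Finset.sum_comm]
      simp only [Finset.mul_sum]
    rw [hcalc]
    have hE : ∑ j ∈ Finset.range (n + 1), c j * ((η ᵥ* A ^ j) ⬝ᵥ xd i) = 0 := by
      have hterm2 : ∀ j ∈ Finset.range (n + 1),
          c j * ((η ᵥ* A ^ j) ⬝ᵥ xd i) = η ⬝ᵥ ((c j • A ^ j) *ᵥ xd i) := by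
        intro j _
        rw [← dotProduct_mulVec, Matrix.smul_mulVec, dotProduct_smul]
        simp [smul_eq_mul]
      rw [Finset.sum_congr rfl hterm2, ← dotProduct_finset_sum, ← finset_sum_mulVec,
        (ch_sum A).1, Matrix.zero_mulVec, dotProduct_zero]
    have hsplit : ∑ j ∈ Finset.range (n + 1), c j *
          (∑ t ∈ Finset.range (L + n), ζ j t ⬝ᵥ ud (i + t))
        = (∑ j ∈ Finset.range (n + 1), (c j *
            (∑ t ∈ Finset.range (L + n), ζ j t ⬝ᵥ ud (i + t))
            + c j * ((η ᵥ* A ^ j) ⬝ᵥ xd i)))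
          - ∑ j ∈ Finset.range (n + 1), c j * ((η ᵥ* A ^ j) ⬝ᵥ xd i) := by
      rw [Finset.sum_add_distrib]; ring
    rw [hsplit, hE, sub_zero]
    apply Finset.sum_eq_zero
    intro j hj
    have h0 := hstep1 j (Nat.lt_succ_iff.mp (Finset.mem_range.mp hj)) i hi
    linear_combination (c j) * h0
  -- Step 3 : xi vanishes
  have hξ : ∀ d, d < L → ξ (L - 1 - d) = 0 := by
    intro d
    induction d using Nat.strong_induction_on with
    | _ d ih =>
      intro hdL
      have hwt := hwzero (n + (L - 1 - d)) (by omega)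
      simp only [hw] at hwt
      rw [Finset.sum_range_succ] at hwt
      have hlast : ζ n (n + (L - 1 - d)) = ξ (L - 1 - d) := by
        rw [hζ]
        simp only []
        rw [if_neg (show ¬ (n + (L - 1 - d) < n) by omega),
          if_pos (show n + (L - 1 - d) < n + L by omega),
          show n + (L - 1 - d) - n = L - 1 - d by omega]
      have hrest : ∀ j ∈ Finset.range n, c j • ζ j (n + (L - 1 - d)) = 0 := by
        intro j hj
        have hjn : j < n := Finset.mem_range.mp hj
        have hz : ζ j (n + (L - 1 - d)) = 0 := by
          rw [hζ]
          simp only []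
          rw [if_neg (show ¬ (n + (L - 1 - d) < j) by omega)]
          by_cases hcase : n + (L - 1 - d) < j + L
          · rw [if_pos hcase,
              show n + (L - 1 - d) - j = L - 1 - (d - (n - j)) by omega]
            exact ih (d - (n - j)) (by omega) (by omega)
          · rw [if_neg hcase]
        rw [hz, smul_zero]
      rw [Finset.sum_eq_zero hrest, hlast] at hwt
      simpa [hc, (ch_sum A).2] using hwt
  have hξfull : ∀ k, k < L → ξ k = 0 := by
    intro q hq
    have := hξ (L - 1 - q) (by omega)
    rwa [show L - 1 - (L - 1 - q) = q by omega] at this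
  -- Step 4 : eta annihilates the controllability matrix
  have hη : ∀ k, k < n → η ᵥ* (A ^ k * B) = 0 := by
    intro k
    induction k using Nat.strong_induction_on with
    | _ k ih =>
      intro hkn
      have hwt := hwzero (n - 1 - k) (by omega)
      simp only [hw] at hwt
      rw [Finset.sum_range_succ] at hwt
      have hlast : ζ n (n - 1 - k) = η ᵥ* (A ^ k * B) := by
        rw [hζ]
        simp only []
        rw [if_pos (show n - 1 - k < n by omega),
          show n - 1 - (n - 1 - k) = k by omega]
      have hrest : ∀ j ∈ Finset.range n, c j • ζ j (n - 1 - k) = 0 := by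
        intro j hj
        have hjn : j < n := Finset.mem_range.mp hj
        by_cases hjt : n - 1 - k < j
        · have hz : ζ j (n - 1 - k) = η ᵥ* (A ^ (j - 1 - (n - 1 - k)) * B) := by
            rw [hζ]; simp only []; rw [if_pos hjt]
          rw [hz, ih (j - 1 - (n - 1 - k)) (by omega) (by omega), smul_zero]
        · have hz : ζ j (n - 1 - k) = 0 := by
            rw [hζ]
            simp only []
            rw [if_neg hjt]
            by_cases h2 : n - 1 - k < j + L
            · rw [if_pos h2]
              exact hξfull (n - 1 - k - j) (by omega)
            · rw [if_neg h2]
          rw [hz, smul_zero]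
      rw [Finset.sum_eq_zero hrest, hlast] at hwt
      simpa [hc, (ch_sum A).2] using hwt
  exact ⟨hξfull, hctrb η hη⟩

lemma mulVec_sum_smul {R C K : Type*} [Fintype C] [Fintype K]
    (M : Matrix R C ℝ) (α : K → ℝ) (v : K → C → ℝ) :
    M *ᵥ (∑ i : K, α i • v i) = ∑ i : K, α i • (M *ᵥ v i) := by
  have : M *ᵥ (∑ i : K, α i • v i) = M.mulVecLin (∑ i : K, α i • v i) := rfl
  rw [this, map_sum]
  exact Finset.sum_congr rfl fun i _ => by rw [_root_.map_smul, Matrix.mulVecLin_apply]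

/-- Willems' fundamental lemma (state-space form). -/
theorem willems_fundamental_lemma
    {n m p N L : ℕ} (hL : 1 ≤ L) (hLN : L + n ≤ N)
    (A : Matrix (Fin n) (Fin n) ℝ) (B : Matrix (Fin n) (Fin m) ℝ)
    (C : Matrix (Fin p) (Fin n) ℝ) (D : Matrix (Fin p) (Fin m) ℝ)
    -- (A,B) controllable: the controllability matrix [B, AB, ..., A^{n-1}B] has rank n
    (hctrb : (Matrix.of (fun (i : Fin n) (jk : Fin n × Fin m) =>
        (A ^ (jk.1 : ℕ) * B) i jk.2)).rank = n)
    (ud : ℕ → Fin m → ℝ) (yd : ℕ → Fin p → ℝ)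
    -- (ud, yd) is an input/output trajectory of the system on [0, N-1]
    (htraj : ∃ xd : ℕ → Fin n → ℝ,
      (∀ t, t + 1 < N → xd (t + 1) = A.mulVec (xd t) + B.mulVec (ud t)) ∧
      (∀ t, t < N → yd t = C.mulVec (xd t) + D.mulVec (ud t)))
    -- ud is persistently exciting of order L + n
    (hPE : (Matrix.of (fun (jr : Fin (L + n) × Fin m) (i : Fin (N - (L + n) + 1)) =>
        ud ((i : ℕ) + (jr.1 : ℕ)) jr.2)).rank = m * (L + n))
    (ubar : ℕ → Fin m → ℝ) (ybar : ℕ → Fin p → ℝ) :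
    -- (ubar, ybar) is a length-L trajectory of the system iff it lies in the span
    -- of the length-L windows of the data
    (∃ xbar : ℕ → Fin n → ℝ,
        (∀ k, k + 1 < L → xbar (k + 1) = A.mulVec (xbar k) + B.mulVec (ubar k)) ∧
        (∀ k, k < L → ybar k = C.mulVec (xbar k) + D.mulVec (ubar k)))
      ↔ (∃ α : Fin (N - L + 1) → ℝ,
        ∀ k, k < L →
          ubar k = ∑ i : Fin (N - L + 1), α i • ud (k + (i : ℕ)) ∧
          ybar k = ∑ i : Fin (N - L + 1), α i • yd (k + (i : ℕ))) := by
  obtain ⟨xd, hxd, hyd⟩ := htraj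
  constructor
  · -- forward direction
    rintro ⟨xbar, hxb, hyb⟩
    -- controllability in kernel form
    have hctrb' : ∀ η : Fin n → ℝ, (∀ j : ℕ, j < n → η ᵥ* (A ^ j * B) = 0) → η = 0 := by
      intro η hη
      refine left_ker_of_full_row_rank _ (by rw [hctrb, Fintype.card_fin]) η ?_
      funext jk
      have h1 := congrFun (hη jk.1 jk.1.isLt) jk.2
      simpa [Matrix.vecMul, dotProduct] using h1
    -- persistency of excitation in kernel form
    have hPE' : ∀ w : ℕ → Fin m → ℝ,
        (∀ i : ℕ, i ≤ N - (L + n) → ∑ t ∈ Finset.range (L + n), w t ⬝ᵥ ud (i + t) = 0) →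
        ∀ t, t < L + n → w t = 0 := by
      intro w hwin t ht
      have h0 : (fun jr : Fin (L + n) × Fin m => w jr.1 jr.2) ᵥ*
          (Matrix.of (fun (jr : Fin (L + n) × Fin m) (i : Fin (N - (L + n) + 1)) =>
            ud ((i : ℕ) + (jr.1 : ℕ)) jr.2)) = 0 := by
        funext i
        have h1 := hwin (i : ℕ) (by omega)
        have h2 : ∑ jr : Fin (L + n) × Fin m, w jr.1 jr.2 * ud ((i : ℕ) + (jr.1 : ℕ)) jr.2
            = ∑ t ∈ Finset.range (L + n), w t ⬝ᵥ ud ((i : ℕ) + t) := by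
          rw [Fintype.sum_prod_type,
            ← Fin.sum_univ_eq_sum_range (fun t => w t ⬝ᵥ ud ((i : ℕ) + t)) (L + n)]
          rfl
        simpa [Matrix.vecMul, dotProduct, h2] using h1
      have hv0 := left_ker_of_full_row_rank _
        (by rw [hPE]; simp [Fintype.card_prod, Fintype.card_fin, Nat.mul_comm])
        _ h0
      funext r
      exact congrFun hv0 (⟨t, ht⟩, r)
    -- the stacked data matrix
    set M : Matrix (Fin L × Fin m ⊕ Fin n) (Fin (N - L + 1)) ℝ :=
      Matrix.of (fun row i => match row with
        | .inl kr => ud ((kr.1 : ℕ) + (i : ℕ)) kr.2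
        | .inr s => xd (i : ℕ) s) with hM
    have hMker : ∀ v : (Fin L × Fin m ⊕ Fin n) → ℝ, v ᵥ* M = 0 → v = 0 := by
      intro v hv
      set ξ : ℕ → Fin m → ℝ := fun k =>
        if h : k < L then (fun r => v (Sum.inl (⟨k, h⟩, r))) else 0 with hξdef
      set η : Fin n → ℝ := fun s => v (Sum.inr s) with hηdef
      have hker : ∀ i : ℕ, i ≤ N - L →
          (∑ k ∈ Finset.range L, ξ k ⬝ᵥ ud (i + k)) + η ⬝ᵥ xd i = 0 := by
        intro i hi
        have hiK : i < N - L + 1 := by omega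
        have h1 := congrFun hv ⟨i, hiK⟩
        rw [Pi.zero_apply] at h1
        have h2 : (v ᵥ* M) ⟨i, hiK⟩
            = (∑ k : Fin L, ξ (k : ℕ) ⬝ᵥ ud (i + (k : ℕ))) + η ⬝ᵥ xd i := by
          rw [hM]
          simp only [Matrix.vecMul, dotProduct, Fintype.sum_sum_type,
            Fintype.sum_prod_type, Matrix.of_apply]
          congr 1
          · refine Finset.sum_congr rfl fun k _ => ?_
            rw [hξdef]
            simp only [dif_pos k.isLt, dotProduct, Fin.eta]
            refine Finset.sum_congr rfl fun r _ => ?_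
            congr 2
            omega
        rw [h2] at h1
        rwa [Fin.sum_univ_eq_sum_range (fun k => ξ k ⬝ᵥ ud (i + k)) L] at h1
      obtain ⟨hξ0, hη0⟩ := key_kernel hL hLN A B ud xd hxd hctrb' hPE' ξ η hker
      funext row
      rcases row with kr | s
      · have := congrFun (hξ0 (kr.1 : ℕ) kr.1.isLt) kr.2
        rw [hξdef] at this
        simpa [dif_pos kr.1.isLt] using this
      · exact congrFun hη0 s
    -- solve for α
    obtain ⟨α, hα⟩ := surj_of_trivial_left_ker M hMker
      (Sum.elim (fun kr => ubar (kr.1 : ℕ) kr.2) (fun s => xbar 0 s))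
    -- extract the input equations
    have hu : ∀ k : ℕ, k < L →
        ubar k = ∑ i : Fin (N - L + 1), α i • ud (k + (i : ℕ)) := by
      intro k hk
      funext r
      have h1 := congrFun hα (Sum.inl (⟨k, hk⟩, r))
      rw [hM] at h1
      simp only [Matrix.mulVec, dotProduct, Sum.elim_inl] at h1
      rw [← h1]
      simp [mul_comm]
    -- the combined state
    set z : ℕ → Fin n → ℝ := fun k => ∑ i : Fin (N - L + 1), α i • xd (k + (i : ℕ)) with hz
    have hz0 : z 0 = xbar 0 := by
      funext s
      have h1 := congrFun hα (Sum.inr s)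
      rw [hM] at h1
      simp only [Matrix.mulVec, dotProduct, Sum.elim_inr] at h1
      rw [← h1, hz]
      simp [mul_comm]
    have hzrec : ∀ k : ℕ, k + 1 < L → z (k + 1) = A.mulVec (z k) + B.mulVec (ubar k) := by
      intro k hk
      have hstep : ∀ i : Fin (N - L + 1),
          xd (k + 1 + (i : ℕ)) = A.mulVec (xd (k + (i : ℕ))) + B.mulVec (ud (k + (i : ℕ))) := by
        intro i
        have hi : (i : ℕ) ≤ N - L := by omega
        have := hxd (k + (i : ℕ)) (by omega)
        rwa [show k + (i : ℕ) + 1 = k + 1 + (i : ℕ) by omega] at this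
      rw [hz]
      simp only []
      calc (∑ i : Fin (N - L + 1), α i • xd (k + 1 + (i : ℕ)))
          = ∑ i : Fin (N - L + 1), α i • (A.mulVec (xd (k + (i : ℕ)))
              + B.mulVec (ud (k + (i : ℕ)))) := by
            exact Finset.sum_congr rfl fun i _ => by rw [hstep i]
        _ = (∑ i : Fin (N - L + 1), α i • A.mulVec (xd (k + (i : ℕ))))
              + ∑ i : Fin (N - L + 1), α i • B.mulVec (ud (k + (i : ℕ))) := by
            rw [← Finset.sum_add_distrib]
            exact Finset.sum_congr rfl fun i _ => smul_add _ _ _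
        _ = A.mulVec (z k) + B.mulVec (ubar k) := by
            rw [hu k (by omega), hz]
            rw [mulVec_sum_smul, mulVec_sum_smul]
    have hzx : ∀ k : ℕ, k < L → z k = xbar k := by
      intro k
      induction k with
      | zero => intro _; exact hz0
      | succ k ih =>
        intro hk
        rw [hzrec k hk, ih (by omega), hxb k hk]
    refine ⟨α, fun k hk => ⟨hu k hk, ?_⟩⟩
    have hyk : ∀ i : Fin (N - L + 1),
        yd (k + (i : ℕ)) = C.mulVec (xd (k + (i : ℕ))) + D.mulVec (ud (k + (i : ℕ))) :=
      fun i => hyd (k + (i : ℕ)) (by omega)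
    calc ybar k = C.mulVec (xbar k) + D.mulVec (ubar k) := hyb k hk
      _ = C.mulVec (z k) + D.mulVec (ubar k) := by rw [hzx k hk]
      _ = ∑ i : Fin (N - L + 1), α i • yd (k + (i : ℕ)) := by
          rw [hu k hk, hz, mulVec_sum_smul, mulVec_sum_smul, ← Finset.sum_add_distrib]
          refine Finset.sum_congr rfl fun i _ => ?_
          rw [hyk i, smul_add]
  · -- reverse direction
    rintro ⟨α, hα⟩
    refine ⟨fun k => ∑ i : Fin (N - L + 1), α i • xd (k + (i : ℕ)), ?_, ?_⟩
    · intro k hk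
      have hstep : ∀ i : Fin (N - L + 1),
          xd (k + 1 + (i : ℕ)) = A.mulVec (xd (k + (i : ℕ))) + B.mulVec (ud (k + (i : ℕ))) := by
        intro i
        have hi : (i : ℕ) ≤ N - L := by omega
        have := hxd (k + (i : ℕ)) (by omega)
        rwa [show k + (i : ℕ) + 1 = k + 1 + (i : ℕ) by omega] at this
      calc (∑ i : Fin (N - L + 1), α i • xd (k + 1 + (i : ℕ)))
          = ∑ i : Fin (N - L + 1), α i • (A.mulVec (xd (k + (i : ℕ)))
              + B.mulVec (ud (k + (i : ℕ)))) := by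
            exact Finset.sum_congr rfl fun i _ => by rw [hstep i]
        _ = (∑ i : Fin (N - L + 1), α i • A.mulVec (xd (k + (i : ℕ))))
              + ∑ i : Fin (N - L + 1), α i • B.mulVec (ud (k + (i : ℕ))) := by
            rw [← Finset.sum_add_distrib]
            exact Finset.sum_congr rfl fun i _ => smul_add _ _ _
        _ = A.mulVec (∑ i : Fin (N - L + 1), α i • xd (k + (i : ℕ)))
              + B.mulVec (ubar k) := by
            rw [(hα k (by omega)).1, mulVec_sum_smul, mulVec_sum_smul]
    · intro k hk
      have hyk : ∀ i : Fin (N - L + 1),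
          yd (k + (i : ℕ)) = C.mulVec (xd (k + (i : ℕ))) + D.mulVec (ud (k + (i : ℕ))) :=
        fun i => hyd (k + (i : ℕ)) (by omega)
      calc ybar k = ∑ i : Fin (N - L + 1), α i • yd (k + (i : ℕ)) := (hα k hk).2
        _ = ∑ i : Fin (N - L + 1), α i • (C.mulVec (xd (k + (i : ℕ)))
              + D.mulVec (ud (k + (i : ℕ)))) := by
            exact Finset.sum_congr rfl fun i _ => by rw [hyk i]
        _ = C.mulVec (∑ i : Fin (N - L + 1), α i • xd (k + (i : ℕ)))
              + D.mulVec (ubar k) := by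
            rw [(hα k hk).1, mulVec_sum_smul, mulVec_sum_smul, ← Finset.sum_add_distrib]
            exact Finset.sum_congr rfl fun i _ => smul_add _ _ _
end

section
/- Feasibility of the true trajectory for the data-based MHE constraints: Suppose (A,B) is controllable, i.e., the controllability matrix [B, AB, ..., A^{n-1}B] has rank n. Let u^d(0),...,u^d(N-1), x^d(0),...,x^d(N-1), y^d(0),...,y^d(N-1) satisfy x^d(t+1)=Ax^d(t)+Bu^d(t) and y^d(t)=Cx^d(t)+Du^d(t), and suppose u^d is persistently exciting of order L+n. Let u(0),...,u(L-1), x(0),...,x(L-1), y(0),...,y(L-1) be any trajectory of the same system, i.e., x(k+1)=Ax(k)+Bu(k) for 0 <= k <= L-2 and y(k)=Cx(k)+Du(k) for 0 <= k <= L-1. Then there exists alpha in R^{N-L+1} such that simultaneously, for all k in {0,...,L-1}: u(k) = sum_{i=0}^{N-L} alpha_i u^d(k+i), y(k) = sum_{i=0}^{N-L} alpha_i y^d(k+i), and x(k) = sum_{i=0}^{N-L} alpha_i x^d(k+i). -/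
open Matrix

lemma surj_of_rank {ι κ : Type*} [Fintype ι] [Fintype κ] [DecidableEq ι]
    (M : Matrix ι κ ℝ) (h : M.rank = Fintype.card ι) :
    Function.Surjective M.mulVec := by
  have : LinearMap.range M.mulVecLin = ⊤ := by
    apply Submodule.eq_top_of_finrank_eq
    rw [← Matrix.rank, h, Module.finrank_fintype_fun_eq_card]
  intro b
  obtain ⟨a, ha⟩ := LinearMap.range_eq_top.mp this b
  exact ⟨a, ha⟩

lemma null_of_surj {ι κ : Type*} [Fintype ι] [Fintype κ]
    (M : Matrix ι κ ℝ) (h : Function.Surjective M.mulVec)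
    (v : ι → ℝ) (hv : Matrix.vecMul v M = 0) : v = 0 := by
  obtain ⟨w, hw⟩ := h v
  have : v ⬝ᵥ v = 0 := by
    nth_rewrite 2 [← hw]
    rw [Matrix.dotProduct_mulVec, hv, zero_dotProduct]
  exact dotProduct_self_eq_zero.mp this

lemma rank_of_null {ι κ : Type*} [Fintype ι] [Fintype κ] [DecidableEq κ]
    (M : Matrix ι κ ℝ) (h : ∀ v : ι → ℝ, Matrix.vecMul v M = 0 → v = 0) :
    M.rank = Fintype.card ι := by
  rw [← Matrix.rank_transpose]
  have hinj : Function.Injective Mᵀ.mulVecLin := by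
    rw [← LinearMap.ker_eq_bot, Submodule.eq_bot_iff]
    intro v hv
    rw [LinearMap.mem_ker, Matrix.mulVecLin_apply, Matrix.mulVec_transpose] at hv
    exact h v hv
  have := LinearMap.finrank_range_add_finrank_ker Mᵀ.mulVecLin
  rw [LinearMap.ker_eq_bot.mpr hinj, finrank_bot, add_zero,
    Module.finrank_fintype_fun_eq_card] at this
  rw [Matrix.rank, this]
open Matrix BigOperators Finset

lemma mulVec_sum' {ι n m : ℕ} (A : Matrix (Fin n) (Fin m) ℝ) (s : Finset (Fin ι))
    (f : Fin ι → Fin m → ℝ) :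
    A.mulVec (∑ j ∈ s, f j) = ∑ j ∈ s, A.mulVec (f j) :=
  map_sum A.mulVecLin f s

lemma mulVec_sum'' {n m : ℕ} (A : Matrix (Fin n) (Fin m) ℝ) (K : ℕ)
    (f : ℕ → Fin m → ℝ) :
    A.mulVec (∑ j ∈ range K, f j) = ∑ j ∈ range K, A.mulVec (f j) :=
  map_sum A.mulVecLin f (range K)

lemma state_formula {n m : ℕ} (A : Matrix (Fin n) (Fin n) ℝ) (B : Matrix (Fin n) (Fin m) ℝ)
    (x : ℕ → Fin n → ℝ) (u : ℕ → Fin m → ℝ) (K : ℕ)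
    (hdyn : ∀ t, t + 1 ≤ K → x (t + 1) = A.mulVec (x t) + B.mulVec (u t)) :
    ∀ s t, t + s ≤ K →
      x (t + s) = (A ^ s).mulVec (x t)
        + ∑ j ∈ range s, ((A ^ (s - 1 - j)) * B).mulVec (u (t + j)) := by
  intro s
  induction s with
  | zero => intro t _; simp
  | succ s ih =>
    intro t ht
    have h1 : x (t + (s+1)) = A.mulVec (x (t + s)) + B.mulVec (u (t + s)) := by
      have := hdyn (t + s) (by omega)
      rw [← this]; ring_nf
    rw [h1, ih t (by omega)]
    rw [Matrix.mulVec_add, Finset.sum_range_succ]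
    have h2 : A.mulVec ((A ^ s).mulVec (x t)) = (A ^ (s+1)).mulVec (x t) := by
      rw [Matrix.mulVec_mulVec, ← pow_succ']
    have h3 : A.mulVec (∑ j ∈ range s, ((A ^ (s - 1 - j)) * B).mulVec (u (t + j)))
        = ∑ j ∈ range s, ((A ^ (s + 1 - 1 - j)) * B).mulVec (u (t + j)) := by
      rw [mulVec_sum'']
      apply Finset.sum_congr rfl
      intro j hj
      rw [Finset.mem_range] at hj
      rw [Matrix.mulVec_mulVec, ← Matrix.mul_assoc, ← pow_succ']
      have he : s - 1 - j + 1 = s + 1 - 1 - j := by omega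
      rw [he]
    rw [h2, h3]
    have h4 : ((A ^ (s + 1 - 1 - s)) * B).mulVec (u (t + s)) = B.mulVec (u (t + s)) := by
      simp
    rw [h4]
    abel

lemma cayley {n : ℕ} (A : Matrix (Fin n) (Fin n) ℝ) :
    A ^ n = ∑ s ∈ Finset.range n, (-(A.charpoly.coeff s)) • A ^ s := by
  have h0 := A.aeval_self_charpoly
  rw [Polynomial.aeval_eq_sum_range] at h0
  rw [A.charpoly_natDegree_eq_dim] at h0
  simp only [Fintype.card_fin] at h0
  rw [Finset.sum_range_succ] at h0
  have hc : A.charpoly.coeff n = 1 := by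
    have := A.charpoly_monic
    rw [Polynomial.Monic, Polynomial.leadingCoeff, A.charpoly_natDegree_eq_dim] at this
    simpa using this
  rw [hc, one_smul] at h0
  have h1 : A ^ n = -∑ i ∈ Finset.range n, A.charpoly.coeff i • A ^ i := by
    rw [eq_neg_iff_add_eq_zero, add_comm]; exact h0
  rw [h1, ← Finset.sum_neg_distrib]
  apply Finset.sum_congr rfl
  intro s _
  rw [neg_smul]
open Matrix BigOperators Finset

lemma dot_sum {m : ℕ} (v : Fin m → ℝ) {ι : Type*} (s : Finset ι) (f : ι → Fin m → ℝ) :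
    v ⬝ᵥ (∑ j ∈ s, f j) = ∑ j ∈ s, v ⬝ᵥ f j := by
  simp only [dotProduct, Finset.sum_apply, Finset.mul_sum]
  exact Finset.sum_comm

lemma sum_dot {m : ℕ} {ι : Type*} (s : Finset ι) (f : ι → Fin m → ℝ) (v : Fin m → ℝ) :
    (∑ j ∈ s, f j) ⬝ᵥ v = ∑ j ∈ s, f j ⬝ᵥ v := by
  simp only [dotProduct, Finset.sum_apply, Finset.sum_mul]
  exact Finset.sum_comm

open Matrix BigOperators Finset

lemma vecMul_sum' {n m : ℕ} (ξ : Fin n → ℝ) {ι : Type*} (s : Finset ι)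
    (f : ι → Matrix (Fin n) (Fin m) ℝ) :
    Matrix.vecMul ξ (∑ j ∈ s, f j) = ∑ j ∈ s, Matrix.vecMul ξ (f j) := by
  funext j
  simp only [Matrix.vecMul, dotProduct, Finset.sum_apply, Matrix.sum_apply, Finset.mul_sum]
  exact Finset.sum_comm

lemma vecMul_smul' {n m : ℕ} (ξ : Fin n → ℝ) (c : ℝ) (M : Matrix (Fin n) (Fin m) ℝ) :
    Matrix.vecMul ξ (c • M) = c • Matrix.vecMul ξ M := by
  funext j
  simp only [Matrix.vecMul, dotProduct, Matrix.smul_apply, Pi.smul_apply, smul_eq_mul,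
    Finset.mul_sum]
  apply Finset.sum_congr rfl
  intro i _
  ring

noncomputable def phi {n m : ℕ} (A : Matrix (Fin n) (Fin n) ℝ) (B : Matrix (Fin n) (Fin m) ℝ)
    (ξ : Fin n → ℝ) (η : ℕ → Fin m → ℝ) (s j : ℕ) : Fin m → ℝ :=
  if j < s then Matrix.vecMul ξ ((A ^ (s - 1 - j)) * B) else η (j - s)

lemma core_null {n m L N : ℕ} (hL : 1 ≤ L) (hLN : L + n ≤ N)
    (A : Matrix (Fin n) (Fin n) ℝ) (B : Matrix (Fin n) (Fin m) ℝ)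
    (hctrbS : Function.Surjective (Matrix.of (fun (i : Fin n) (jk : Fin n × Fin m) =>
        (A ^ (jk.1 : ℕ) * B) i jk.2)).mulVec)
    (ud : ℕ → Fin m → ℝ) (xd : ℕ → Fin n → ℝ)
    (hxd : ∀ t, t + 1 < N → xd (t + 1) = A.mulVec (xd t) + B.mulVec (ud t))
    (hPES : Function.Surjective (Matrix.of (fun (jr : Fin (L + n) × Fin m) (i : Fin (N - (L + n) + 1)) =>
        ud ((i : ℕ) + (jr.1 : ℕ)) jr.2)).mulVec)
    (ξ : Fin n → ℝ) (η : ℕ → Fin m → ℝ) (hηL : ∀ k, L ≤ k → η k = 0)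
    (hstar : ∀ t, t ≤ N - L → ξ ⬝ᵥ xd t + ∑ k ∈ range L, η k ⬝ᵥ ud (t + k) = 0) :
    ξ = 0 ∧ ∀ k, η k = 0 := by
  set c : ℕ → ℝ := fun s => -(A.charpoly.coeff s) with hc
  have hCH : A ^ n = ∑ s ∈ range n, c s • A ^ s := cayley A
  -- the shifted relations
  have hz : ∀ s, s ≤ n → ∀ t, t ≤ N - (L + n) →
      Matrix.vecMul ξ (A ^ s) ⬝ᵥ xd t
        + ∑ j ∈ range (L + n), phi A B ξ η s j ⬝ᵥ ud (t + j) = 0 := by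
    intro s hs t ht
    have hsf := state_formula A B xd ud (N - 1)
      (fun t' ht' => hxd t' (by omega)) s t (by omega)
    have h2 := hstar (t + s) (by omega)
    rw [hsf, dotProduct_add, dot_sum] at h2
    rw [Matrix.dotProduct_mulVec] at h2
    have h3 : ∀ j ∈ range s, ξ ⬝ᵥ ((A ^ (s - 1 - j)) * B).mulVec (ud (t + j))
        = Matrix.vecMul ξ ((A ^ (s - 1 - j)) * B) ⬝ᵥ ud (t + j) := by
      intro j _; rw [Matrix.dotProduct_mulVec]
    rw [Finset.sum_congr rfl h3] at h2
    have hsplit : ∑ j ∈ range (L + n), phi A B ξ η s j ⬝ᵥ ud (t + j)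
        = ∑ j ∈ range s, Matrix.vecMul ξ ((A ^ (s - 1 - j)) * B) ⬝ᵥ ud (t + j)
          + ∑ k ∈ range L, η k ⬝ᵥ ud (t + s + k) := by
      have e0 : ∑ j ∈ range (L + n), phi A B ξ η s j ⬝ᵥ ud (t + j)
          = ∑ j ∈ Finset.Ico 0 s, phi A B ξ η s j ⬝ᵥ ud (t + j)
            + ∑ j ∈ Finset.Ico s (L + n), phi A B ξ η s j ⬝ᵥ ud (t + j) := by
        rw [Finset.range_eq_Ico,
          ← Finset.sum_Ico_consecutive _ (Nat.zero_le s) (by omega : s ≤ L + n)]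
      rw [e0]
      congr 1
      · rw [← Finset.range_eq_Ico]
        apply Finset.sum_congr rfl
        intro j hj
        rw [Finset.mem_range] at hj
        rw [phi, if_pos hj]
      · rw [Finset.sum_Ico_eq_sum_range]
        have e1 : ∀ k, phi A B ξ η s (s + k) ⬝ᵥ ud (t + (s + k)) = η k ⬝ᵥ ud (t + s + k) := by
          intro k
          rw [phi, if_neg (by omega)]
          have h4 : s + k - s = k := by omega
          have h5 : t + (s + k) = t + s + k := by omega
          rw [h4, h5]
        rw [Finset.sum_congr rfl (fun k _ => e1 k)]
        have hL' : L ≤ L + n - s := by omega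
        rw [← Finset.sum_subset (Finset.range_subset_range.mpr hL')]
        intro k _ hk
        rw [Finset.mem_range, not_lt] at hk
        rw [hηL k hk, zero_dotProduct]
    rw [hsplit, ← add_assoc]
    exact h2
  -- the deep annihilator
  set H : Matrix (Fin (L + n) × Fin m) (Fin (N - (L + n) + 1)) ℝ :=
    Matrix.of (fun (jr : Fin (L + n) × Fin m) (i : Fin (N - (L + n) + 1)) =>
        ud ((i : ℕ) + (jr.1 : ℕ)) jr.2) with hH
  set w : Fin (L + n) × Fin m → ℝ :=
    fun jr => phi A B ξ η n jr.1 jr.2 - ∑ s ∈ range n, c s * phi A B ξ η s jr.1 jr.2 with hw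
  have hwnull : Matrix.vecMul w H = 0 := by
    funext i
    have hival : (i : ℕ) ≤ N - (L + n) := by omega
    show ∑ jr : Fin (L + n) × Fin m, w jr * H jr i = 0
    rw [Fintype.sum_prod_type]
    have hstep : ∀ j : Fin (L + n),
        ∑ r : Fin m, w (j, r) * H (j, r) i
          = phi A B ξ η n j ⬝ᵥ ud ((i : ℕ) + j)
            - ∑ s ∈ range n, c s * (phi A B ξ η s j ⬝ᵥ ud ((i : ℕ) + j)) := by
      intro j
      simp only [hw, hH, Matrix.of_apply, sub_mul, Finset.sum_sub_distrib, dotProduct,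
        Finset.mul_sum, Finset.sum_mul]
      congr 1
      rw [Finset.sum_comm]
      apply Finset.sum_congr rfl
      intro s _
      apply Finset.sum_congr rfl
      intro r _
      ring
    rw [Finset.sum_congr rfl (fun j _ => hstep j)]
    rw [Finset.sum_sub_distrib]
    have hconv : ∀ f : ℕ → ℝ, ∑ j : Fin (L + n), f (j : ℕ) = ∑ j ∈ range (L + n), f j :=
      fun f => Fin.sum_univ_eq_sum_range f (L + n)
    rw [hconv (fun j => phi A B ξ η n j ⬝ᵥ ud ((i : ℕ) + j))]
    have h5 : ∑ j : Fin (L + n), ∑ s ∈ range n,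
          c s * (phi A B ξ η s (j : ℕ) ⬝ᵥ ud ((i : ℕ) + (j : ℕ)))
        = ∑ s ∈ range n, c s * ∑ j ∈ range (L + n), phi A B ξ η s j ⬝ᵥ ud ((i : ℕ) + j) := by
      rw [Finset.sum_comm]
      apply Finset.sum_congr rfl
      intro s _
      rw [Finset.mul_sum, hconv (fun j => c s * (phi A B ξ η s j ⬝ᵥ ud ((i : ℕ) + j)))]
    rw [h5]
    have h6 : ∀ s, s ≤ n → ∑ j ∈ range (L + n), phi A B ξ η s j ⬝ᵥ ud ((i : ℕ) + j)
        = -(Matrix.vecMul ξ (A ^ s) ⬝ᵥ xd (i : ℕ)) := by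
      intro s hs
      have := hz s hs (i : ℕ) hival
      linarith
    rw [h6 n le_rfl, Finset.sum_congr rfl (fun s hs => by
      rw [h6 s (le_of_lt (Finset.mem_range.mp hs))])]
    have h7 : Matrix.vecMul ξ (A ^ n) ⬝ᵥ xd (i : ℕ)
        = ∑ s ∈ range n, c s * (Matrix.vecMul ξ (A ^ s) ⬝ᵥ xd (i : ℕ)) := by
      conv_lhs => rw [hCH]
      rw [vecMul_sum', sum_dot]
      apply Finset.sum_congr rfl
      intro s _
      rw [vecMul_smul', smul_dotProduct, smul_eq_mul]
    have h8 : ∑ s ∈ range n, c s * -(Matrix.vecMul ξ (A ^ s) ⬝ᵥ xd (i : ℕ))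
        = -∑ s ∈ range n, c s * (Matrix.vecMul ξ (A ^ s) ⬝ᵥ xd (i : ℕ)) := by
      rw [← Finset.sum_neg_distrib]
      apply Finset.sum_congr rfl
      intro s _
      ring
    rw [h8, h7]
    simp
  have hw0 : w = 0 := null_of_surj H hPES w hwnull
  have hφeq : ∀ j : ℕ, j < L + n → ∀ r : Fin m,
      phi A B ξ η n j r = ∑ s ∈ range n, c s * phi A B ξ η s j r := by
    intro j hj r
    have := congrFun hw0 (⟨j, hj⟩, r)
    simp only [hw, Pi.zero_apply] at this
    linarith [this]
  -- kill η
  have hη0 : ∀ k, η k = 0 := by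
    have key : ∀ rr q, L ≤ q + rr → η q = 0 := by
      intro rr
      induction rr with
      | zero => intro q hq; exact hηL q (by omega)
      | succ r ih =>
        intro q hq
        by_cases hqL : L ≤ q
        · exact hηL q hqL
        · funext rIdx
          have h1 : phi A B ξ η n (n + q) rIdx = η q rIdx := by
            rw [phi, if_neg (by omega)]
            have : n + q - n = q := by omega
            rw [this]
          have h2 := hφeq (n + q) (by omega) rIdx
          rw [h1] at h2
          rw [h2]
          rw [Pi.zero_apply]
          apply Finset.sum_eq_zero
          intro s hs
          rw [Finset.mem_range] at hs
          have h3 : phi A B ξ η s (n + q) rIdx = η (n + q - s) rIdx := by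
            rw [phi, if_neg (by omega)]
          rw [h3, ih (n + q - s) (by omega), Pi.zero_apply, mul_zero]
    intro k
    exact key L k (by omega)
  -- kill ξ against the controllability matrix
  have hξB : ∀ a, a < n → Matrix.vecMul ξ ((A ^ a) * B) = 0 := by
    intro a
    induction a using Nat.strong_induction_on with
    | _ a iha =>
      intro han
      funext rIdx
      have hj : n - 1 - a < n := by omega
      have h1 : phi A B ξ η n (n - 1 - a) rIdx
          = Matrix.vecMul ξ ((A ^ a) * B) rIdx := by
        rw [phi, if_pos hj]
        have : n - 1 - (n - 1 - a) = a := by omega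
        rw [this]
      have h2 := hφeq (n - 1 - a) (by omega) rIdx
      rw [h1] at h2
      rw [h2, Pi.zero_apply]
      apply Finset.sum_eq_zero
      intro s hs
      rw [Finset.mem_range] at hs
      by_cases hsj : n - 1 - a < s
      · have h3 : phi A B ξ η s (n - 1 - a) rIdx
            = Matrix.vecMul ξ ((A ^ (s - 1 - (n - 1 - a))) * B) rIdx := by
          rw [phi, if_pos hsj]
        rw [h3, iha (s - 1 - (n - 1 - a)) (by omega) (by omega), Pi.zero_apply, mul_zero]
      · have h3 : phi A B ξ η s (n - 1 - a) rIdx = η (n - 1 - a - s) rIdx := by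
          rw [phi, if_neg hsj]
        rw [h3, hη0, Pi.zero_apply, mul_zero]
  have hξ : ξ = 0 := by
    have hv : Matrix.vecMul ξ (Matrix.of (fun (i : Fin n) (jk : Fin n × Fin m) =>
        (A ^ (jk.1 : ℕ) * B) i jk.2)) = 0 := by
      funext jk
      rw [Pi.zero_apply]
      show ∑ i, ξ i * (A ^ (jk.1 : ℕ) * B) i jk.2 = 0
      have h9 := congrFun (hξB (jk.1 : ℕ) jk.1.isLt) jk.2
      simpa [Matrix.vecMul, dotProduct] using h9
    exact null_of_surj _ hctrbS ξ hv
  exact ⟨hξ, hη0⟩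




open Matrix BigOperators

/-- Feasibility of the true trajectory for the data-based MHE constraints:
any length-L input/state/output trajectory of the system can be written as a
linear combination (with one common coefficient vector α) of the length-L
windows of a persistently exciting offline input/state/output data trajectory. -/
theorem true_trajectory_feasible
    {n m p N L : ℕ} (hL : 1 ≤ L) (hLN : L + n ≤ N)
    (A : Matrix (Fin n) (Fin n) ℝ) (B : Matrix (Fin n) (Fin m) ℝ)
    (C : Matrix (Fin p) (Fin n) ℝ) (D : Matrix (Fin p) (Fin m) ℝ)
    -- (A,B) controllable: the controllability matrix [B, AB, ..., A^{n-1}B] has rank n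
    (hctrb : (Matrix.of (fun (i : Fin n) (jk : Fin n × Fin m) =>
        (A ^ (jk.1 : ℕ) * B) i jk.2)).rank = n)
    (ud : ℕ → Fin m → ℝ) (xd : ℕ → Fin n → ℝ) (yd : ℕ → Fin p → ℝ)
    (hxd : ∀ t, t + 1 < N → xd (t + 1) = A.mulVec (xd t) + B.mulVec (ud t))
    (hyd : ∀ t, t < N → yd t = C.mulVec (xd t) + D.mulVec (ud t))
    -- ud is persistently exciting of order L + n
    (hPE : (Matrix.of (fun (jr : Fin (L + n) × Fin m) (i : Fin (N - (L + n) + 1)) =>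
        ud ((i : ℕ) + (jr.1 : ℕ)) jr.2)).rank = m * (L + n))
    (u : ℕ → Fin m → ℝ) (x : ℕ → Fin n → ℝ) (y : ℕ → Fin p → ℝ)
    (hx : ∀ k, k + 1 < L → x (k + 1) = A.mulVec (x k) + B.mulVec (u k))
    (hy : ∀ k, k < L → y k = C.mulVec (x k) + D.mulVec (u k)) :
    ∃ α : Fin (N - L + 1) → ℝ,
      ∀ k, k < L →
        u k = ∑ i : Fin (N - L + 1), α i • ud (k + (i : ℕ)) ∧
        y k = ∑ i : Fin (N - L + 1), α i • yd (k + (i : ℕ)) ∧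
        x k = ∑ i : Fin (N - L + 1), α i • xd (k + (i : ℕ)) := by
  have hctrbS : Function.Surjective (Matrix.of (fun (i : Fin n) (jk : Fin n × Fin m) =>
      (A ^ (jk.1 : ℕ) * B) i jk.2)).mulVec := by
    apply surj_of_rank _ (by rw [hctrb, Fintype.card_fin])
  have hPES : Function.Surjective (Matrix.of
      (fun (jr : Fin (L + n) × Fin m) (i : Fin (N - (L + n) + 1)) =>
        ud ((i : ℕ) + (jr.1 : ℕ)) jr.2)).mulVec := by
    apply surj_of_rank _ (by
      rw [hPE, Fintype.card_prod, Fintype.card_fin, Fintype.card_fin, mul_comm])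
  set M : Matrix (Fin n ⊕ Fin L × Fin m) (Fin (N - L + 1)) ℝ :=
    Matrix.of (fun rr i => Sum.elim (fun a => xd (i : ℕ) a)
      (fun kr => ud ((kr.1 : ℕ) + (i : ℕ)) kr.2) rr) with hM
  have hMnull : ∀ v : (Fin n ⊕ Fin L × Fin m) → ℝ, Matrix.vecMul v M = 0 → v = 0 := by
    intro v hv
    set ξ : Fin n → ℝ := fun a => v (Sum.inl a) with hξdef
    set η : ℕ → Fin m → ℝ :=
      fun k => if h : k < L then (fun r => v (Sum.inr (⟨k, h⟩, r))) else 0 with hηdef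
    have hηL : ∀ k, L ≤ k → η k = 0 := by
      intro k hk; rw [hηdef]; simp only; rw [dif_neg (by omega)]
    have hstar : ∀ t, t ≤ N - L → ξ ⬝ᵥ xd t + ∑ k ∈ Finset.range L, η k ⬝ᵥ ud (t + k) = 0 := by
      intro t ht
      have h0 := congrFun hv ⟨t, by omega⟩
      rw [Pi.zero_apply] at h0
      have h1 : Matrix.vecMul v M ⟨t, by omega⟩
          = ∑ rr : Fin n ⊕ Fin L × Fin m, v rr * M rr ⟨t, by omega⟩ := rfl
      rw [h1, Fintype.sum_sum_type] at h0
      have h2 : ∑ a : Fin n, v (Sum.inl a) * M (Sum.inl a) ⟨t, by omega⟩ = ξ ⬝ᵥ xd t := rfl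
      have h3 : ∑ kr : Fin L × Fin m, v (Sum.inr kr) * M (Sum.inr kr) ⟨t, by omega⟩
          = ∑ k ∈ Finset.range L, η k ⬝ᵥ ud (t + k) := by
        rw [Fintype.sum_prod_type]
        have h4 : ∀ k : Fin L, ∑ r : Fin m, v (Sum.inr (k, r)) * M (Sum.inr (k, r)) ⟨t, by omega⟩
            = η (k : ℕ) ⬝ᵥ ud (t + (k : ℕ)) := by
          intro k
          have h5 : η (k : ℕ) = fun r => v (Sum.inr (⟨(k : ℕ), k.isLt⟩, r)) := by
            rw [hηdef]; simp only; rw [dif_pos k.isLt]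
          rw [h5]
          have h6 : t + (k : ℕ) = (k : ℕ) + t := by omega
          rw [h6]
          apply Finset.sum_congr rfl
          intro r _
          rw [Fin.eta]
          rfl
        rw [Finset.sum_congr rfl (fun k _ => h4 k)]
        exact Fin.sum_univ_eq_sum_range (fun k => η k ⬝ᵥ ud (t + k)) L
      rw [h2, h3] at h0
      exact h0
    obtain ⟨hξ0, hη0⟩ := core_null hL hLN A B hctrbS ud xd hxd hPES ξ η hηL hstar
    funext rr
    rcases rr with a | ⟨k, r⟩
    · exact congrFun hξ0 a
    · have := congrFun (hη0 (k : ℕ)) r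
      rw [hηdef] at this
      simp only at this
      rw [dif_pos k.isLt, Fin.eta] at this
      exact this
  have hMsurj : Function.Surjective M.mulVec := by
    apply surj_of_rank _ (rank_of_null M hMnull)
  obtain ⟨α, hα⟩ := hMsurj (Sum.elim (x 0) (fun kr => u (kr.1 : ℕ) kr.2))
  refine ⟨α, ?_⟩
  have hU : ∀ k, k < L → u k = ∑ i : Fin (N - L + 1), α i • ud (k + (i : ℕ)) := by
    intro k hk
    funext r
    have h0 : (∑ i : Fin (N - L + 1), ud (k + (i : ℕ)) r * α i) = u k r :=
      congrFun hα (Sum.inr (⟨k, hk⟩, r))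
    rw [Finset.sum_apply, ← h0]
    apply Finset.sum_congr rfl
    intro i _
    rw [Pi.smul_apply, smul_eq_mul, mul_comm]
  have hX : ∀ k, k < L → x k = ∑ i : Fin (N - L + 1), α i • xd (k + (i : ℕ)) := by
    intro k
    induction k with
    | zero =>
      intro _
      funext a
      have h0 : (∑ i : Fin (N - L + 1), xd (i : ℕ) a * α i) = x 0 a :=
        congrFun hα (Sum.inl a)
      rw [Finset.sum_apply, ← h0]
      apply Finset.sum_congr rfl
      intro i _
      rw [Pi.smul_apply, smul_eq_mul, mul_comm]
      norm_num
    | succ k ih =>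
      intro hk1
      have hk : k < L := by omega
      rw [hx k hk1, ih hk, hU k hk]
      rw [mulVec_sum' A Finset.univ (fun i => α i • xd (k + (i : ℕ))),
        mulVec_sum' B Finset.univ (fun i => α i • ud (k + (i : ℕ)))]
      rw [← Finset.sum_add_distrib]
      apply Finset.sum_congr rfl
      intro i _
      have hi : (i : ℕ) < N - L + 1 := i.isLt
      rw [Matrix.mulVec_smul, Matrix.mulVec_smul, ← smul_add]
      congr 1
      have h7 := hxd (k + (i : ℕ)) (by omega)
      rw [← h7]
      have he : k + (i : ℕ) + 1 = k + 1 + (i : ℕ) := by omega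
      rw [he]
  have hY : ∀ k, k < L → y k = ∑ i : Fin (N - L + 1), α i • yd (k + (i : ℕ)) := by
    intro k hk
    rw [hy k hk, hX k hk, hU k hk]
    rw [mulVec_sum' C Finset.univ (fun i => α i • xd (k + (i : ℕ))),
      mulVec_sum' D Finset.univ (fun i => α i • ud (k + (i : ℕ)))]
    rw [← Finset.sum_add_distrib]
    apply Finset.sum_congr rfl
    intro i _
    have hi : (i : ℕ) < N - L + 1 := i.isLt
    rw [Matrix.mulVec_smul, Matrix.mulVec_smul, ← smul_add]
    congr 1
    exact (hyd (k + (i : ℕ)) (by omega)).symm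
  exact fun k hk => ⟨hU k hk, hY k hk, hX k hk⟩
end

section
/- Incremental exponential uniform output-to-state stability of detectable linear systems (linear e-UOSS): Let A in R^{n x n} and C in R^{p x n}, and suppose (A,C) is detectable, i.e., there exists K in R^{n x p} such that the spectral radius of A - KC is strictly less than 1. Then there exist constants c_beta >= 1, lambda_beta in (0,1), and c_gamma > 0 such that for every e in R^n and every tau in N: |A^tau e| <= max( c_beta lambda_beta^tau |e| , c_gamma max_{0 <= k <= tau-1} |C A^k e| ), where the second term is taken as 0 when tau = 0 and |.| denotes the Euclidean norm. (Equivalently: for any two solutions of x(t+1)=Ax(t)+Bu(t) driven by the same input, the difference of the states at time tau is bounded by the maximum of an exponentially decaying term in the initial state difference and a linear gain times the largest past output difference.) -/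
open Matrix BigOperators

/-- Euclidean norm of a vector in `Fin k → ℝ`. -/
noncomputable def enorm {k : ℕ} (s : Fin k → ℝ) : ℝ := Real.sqrt (∑ i, s i ^ 2)

/-- Maximum of `f 0, …, f (τ-1)`, taken as `0` for `τ = 0`. -/
noncomputable def maxUpTo (τ : ℕ) (f : ℕ → ℝ) : ℝ := (Finset.range τ).fold max 0 f

section Aux

open Filter
open scoped NNReal ENNReal

attribute [local instance] Matrix.linftyOpNormedRing Matrix.linftyOpNormedAlgebra
  Matrix.linftyOpNormedAddCommGroup

theorem aux_pow_bound {n : ℕ} (B : Matrix (Fin n) (Fin n) ℂ)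
    (h : ∀ μ ∈ spectrum ℂ B, ‖μ‖ < 1) :
    ∃ c lam : ℝ, 1 ≤ c ∧ lam ∈ Set.Ioo (0:ℝ) 1 ∧ ∀ t : ℕ, ‖B ^ t‖ ≤ c * lam ^ t := by
  have hrad : spectralRadius ℂ B < 1 := by
    rcases Set.eq_empty_or_nonempty (spectrum ℂ B) with he | hne
    · rw [spectralRadius, he]; simp
    · have := spectrum.spectralRadius_lt_of_forall_lt_of_nonempty (𝕜 := ℂ) hne
        (r := 1) (fun k hk => by simpa [← NNReal.coe_lt_coe] using h k hk)
      simpa using this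
  obtain ⟨r, hr1, hr2⟩ := ENNReal.lt_iff_exists_nnreal_btwn.mp hrad
  have hr2' : r < 1 := by exact_mod_cast hr2
  set lam : ℝ≥0 := max r (1/2) with hlamdef
  have hrpos : (0:ℝ≥0) < lam := lt_of_lt_of_le (by norm_num) (le_max_right _ _)
  have hlam1 : lam < 1 := max_lt hr2' (by rw [← NNReal.coe_lt_coe]; norm_num)
  have hlamrad : spectralRadius ℂ B < (lam : ℝ≥0∞) :=
    lt_of_lt_of_le hr1 (by exact_mod_cast le_max_left _ _)
  have hG := spectrum.pow_nnnorm_pow_one_div_tendsto_nhds_spectralRadius B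
  have hev : ∀ᶠ t : ℕ in atTop, (‖B ^ t‖₊ : ℝ≥0∞) ^ (1 / (t:ℝ)) < (lam : ℝ≥0∞) :=
    hG.eventually_lt_const hlamrad
  obtain ⟨N, hN⟩ := hev.exists_forall_of_atTop
  have key : ∀ t : ℕ, max N 1 ≤ t → ‖B ^ t‖₊ ≤ lam ^ t := by
    intro t ht
    have ht1 : (1:ℕ) ≤ t := le_trans (le_max_right _ _) ht
    have h1 := hN t (le_trans (le_max_left _ _) ht)
    have htR : (0:ℝ) < (t:ℝ) := by exact_mod_cast ht1
    have h2 : ((‖B ^ t‖₊ : ℝ≥0∞) ^ (1 / (t:ℝ))) ^ (t:ℝ) ≤ ((lam : ℝ≥0∞)) ^ (t:ℝ) :=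
      ENNReal.rpow_le_rpow h1.le htR.le
    rw [← ENNReal.rpow_mul, one_div, inv_mul_cancel₀ htR.ne', ENNReal.rpow_one,
      ENNReal.rpow_natCast] at h2
    exact_mod_cast h2
  set M := max N 1 with hM
  set c : ℝ := 1 + ∑ t ∈ Finset.range M, ‖B ^ t‖ / (lam:ℝ) ^ t with hc
  have hcsum : (0:ℝ) ≤ ∑ t ∈ Finset.range M, ‖B ^ t‖ / (lam:ℝ) ^ t :=
    Finset.sum_nonneg fun t _ => div_nonneg (norm_nonneg _) (by positivity)
  have hc1 : (1:ℝ) ≤ c := by simp [hc, hcsum]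
  refine ⟨c, lam, hc1, ⟨by exact_mod_cast hrpos, by exact_mod_cast hlam1⟩, ?_⟩
  intro t
  have hlampos : (0:ℝ) < (lam:ℝ) := by exact_mod_cast hrpos
  rcases le_or_gt M t with hMt | hMt
  · have := key t hMt
    calc ‖B ^ t‖ ≤ (lam:ℝ) ^ t := by exact_mod_cast this
    _ ≤ c * (lam:ℝ) ^ t := le_mul_of_one_le_left (by positivity) hc1
  · have hmem : t ∈ Finset.range M := Finset.mem_range.mpr hMt
    have h1 : ‖B ^ t‖ / (lam:ℝ) ^ t ≤ c := by
      have hs := Finset.single_le_sum (f := fun s => ‖B ^ s‖ / (lam:ℝ) ^ s)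
        (fun s _ => div_nonneg (norm_nonneg _) (by positivity)) hmem
      simp only [hc]; linarith
    exact (div_le_iff₀ (by positivity : (0:ℝ) < (lam:ℝ) ^ t)).mp h1

lemma enorm_eq_norm {k : ℕ} (v : Fin k → ℝ) :
    _root_.enorm v = ‖(WithLp.equiv 2 (Fin k → ℝ)).symm v‖ := by
  rw [EuclideanSpace.norm_eq]
  simp [_root_.enorm, WithLp.equiv_symm_apply, PiLp.toLp_apply, Real.norm_eq_abs, sq_abs]

lemma enorm_nonneg {k : ℕ} (v : Fin k → ℝ) : 0 ≤ _root_.enorm v := Real.sqrt_nonneg _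

lemma enorm_add_le' {k : ℕ} (v w : Fin k → ℝ) :
    _root_.enorm (v + w) ≤ _root_.enorm v + _root_.enorm w := by
  simp only [enorm_eq_norm, WithLp.equiv_symm_apply, WithLp.toLp_add]
  exact norm_add_le _ _

lemma enorm_sum_le' {k : ℕ} (s : Finset ℕ) (f : ℕ → Fin k → ℝ) :
    _root_.enorm (∑ j ∈ s, f j) ≤ ∑ j ∈ s, _root_.enorm (f j) := by
  simp only [enorm_eq_norm]
  have : (WithLp.equiv 2 (Fin k → ℝ)).symm (∑ j ∈ s, f j)
      = ∑ j ∈ s, (WithLp.equiv 2 (Fin k → ℝ)).symm (f j) := by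
    induction s using Finset.cons_induction with
    | empty => simp
    | cons a s ha ih => simp [Finset.sum_insert ha, WithLp.equiv_symm_apply, WithLp.toLp_add, ih]
  rw [this]
  exact norm_sum_le _ _

lemma abs_le_enorm {k : ℕ} (v : Fin k → ℝ) (i : Fin k) : |v i| ≤ _root_.enorm v := by
  rw [← Real.sqrt_sq_eq_abs]
  exact Real.sqrt_le_sqrt (Finset.single_le_sum (fun j _ => sq_nonneg (v j)) (Finset.mem_univ i))

lemma enorm_le_of_forall {m : ℕ} (w : Fin m → ℝ) (b : ℝ) (hb : 0 ≤ b)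
    (h : ∀ i, |w i| ≤ b) : _root_.enorm w ≤ Real.sqrt m * b := by
  have h1 : ∑ i, w i ^ 2 ≤ ∑ _i : Fin m, b ^ 2 :=
    Finset.sum_le_sum fun i _ => by
      rw [← sq_abs]; exact pow_le_pow_left₀ (abs_nonneg _) (h i) 2
  calc _root_.enorm w ≤ Real.sqrt (∑ _i : Fin m, b ^ 2) := Real.sqrt_le_sqrt h1
    _ = Real.sqrt m * b := by
        simp [Finset.sum_const, Finset.card_univ, mul_comm,
          Real.sqrt_mul (by positivity : (0:ℝ) ≤ (m:ℝ)), Real.sqrt_sq hb]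

lemma row_sum_le_norm {m q : ℕ} (X : Matrix (Fin m) (Fin q) ℝ) (i : Fin m) :
    ∑ j, |X i j| ≤ ‖X‖ := by
  rw [Matrix.linfty_opNorm_def]
  have : (∑ j, ‖X i j‖₊) ≤ (Finset.univ : Finset (Fin m)).sup fun i => ∑ j, ‖X i j‖₊ :=
    Finset.le_sup (f := fun i => ∑ j, ‖X i j‖₊) (Finset.mem_univ i)
  calc ∑ j, |X i j| = ((∑ j, ‖X i j‖₊ : ℝ≥0) : ℝ) := by
        push_cast [← norm_toNNReal]; simp [Real.norm_eq_abs]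
    _ ≤ _ := by exact_mod_cast this

lemma enorm_mulVec_le {m q : ℕ} (X : Matrix (Fin m) (Fin q) ℝ) (v : Fin q → ℝ) :
    _root_.enorm (X.mulVec v) ≤ Real.sqrt m * (‖X‖ * _root_.enorm v) := by
  refine enorm_le_of_forall _ _ (mul_nonneg (norm_nonneg _) (enorm_nonneg _)) fun i => ?_
  calc |(X.mulVec v) i| = |∑ j, X i j * v j| := by rfl
    _ ≤ ∑ j, |X i j| * |v j| := (Finset.abs_sum_le_sum_abs _ _).trans (by simp [abs_mul])
    _ ≤ ∑ j, |X i j| * _root_.enorm v :=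
        Finset.sum_le_sum fun j _ => mul_le_mul_of_nonneg_left (abs_le_enorm v j) (abs_nonneg _)
    _ = (∑ j, |X i j|) * _root_.enorm v := by rw [Finset.sum_mul]
    _ ≤ ‖X‖ * _root_.enorm v :=
        mul_le_mul_of_nonneg_right (row_sum_le_norm X i) (enorm_nonneg _)

lemma norm_map_complex {m q : ℕ} (X : Matrix (Fin m) (Fin q) ℝ) :
    ‖X.map (algebraMap ℝ ℂ)‖ = ‖X‖ := by
  rw [Matrix.linfty_opNorm_def, Matrix.linfty_opNorm_def]
  congr 1
  apply Finset.sup_congr rfl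
  intro i _
  apply Finset.sum_congr rfl
  intro j _
  simp [Matrix.map_apply, nnnorm]

lemma zero_le_fold_max (s : Finset ℕ) (f : ℕ → ℝ) : 0 ≤ s.fold max 0 f := by
  induction s using Finset.cons_induction with
  | empty => simp
  | cons a s ha ih => rw [Finset.fold_cons]; exact le_trans ih (le_max_right _ _)

lemma le_fold_max (s : Finset ℕ) (f : ℕ → ℝ) (k : ℕ) (hk : k ∈ s) :
    f k ≤ s.fold max 0 f := by
  induction s using Finset.cons_induction with
  | empty => simp at hk
  | cons a s ha ih =>
    rw [Finset.fold_cons]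
    rcases Finset.mem_cons.mp hk with h | h
    · subst h; exact le_max_left _ _
    · exact le_trans (ih h) (le_max_right _ _)

lemma sum_mulVec' {m q : ℕ} (s : Finset ℕ) (f : ℕ → Matrix (Fin m) (Fin q) ℝ)
    (v : Fin q → ℝ) :
    (∑ j ∈ s, f j).mulVec v = ∑ j ∈ s, (f j).mulVec v := by
  induction s using Finset.cons_induction with
  | empty => simp [Matrix.zero_mulVec]
  | cons a s ha ih => rw [Finset.sum_cons, Finset.sum_cons, Matrix.add_mulVec, ih]

lemma maxUpTo_nonneg (τ : ℕ) (f : ℕ → ℝ) : 0 ≤ maxUpTo τ f :=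
  zero_le_fold_max _ _

lemma le_maxUpTo (τ : ℕ) (f : ℕ → ℝ) (k : ℕ) (hk : k ∈ Finset.range τ) :
    f k ≤ maxUpTo τ f :=
  le_fold_max _ _ _ hk

/-- the variation-of-constants decomposition -/
lemma decomp {n p : ℕ} (A : Matrix (Fin n) (Fin n) ℝ) (K : Matrix (Fin n) (Fin p) ℝ)
    (C : Matrix (Fin p) (Fin n) ℝ) (τ : ℕ) :
    A ^ τ = (A - K * C) ^ τ
      + ∑ k ∈ Finset.range τ, (A - K * C) ^ (τ - 1 - k) * ((K * C) * A ^ k) := by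
  induction τ with
  | zero => simp
  | succ τ ih =>
    have hA : A = (A - K * C) + K * C := by rw [sub_add_cancel]
    calc A ^ (τ + 1) = ((A - K * C) + K * C) * A ^ τ := by rw [← hA, pow_succ']
    _ = (A - K * C) * A ^ τ + (K * C) * A ^ τ := by rw [add_mul]
    _ = (A - K * C) * ((A - K * C) ^ τ
          + ∑ k ∈ Finset.range τ, (A - K * C) ^ (τ - 1 - k) * ((K * C) * A ^ k))
        + (K * C) * A ^ τ := by rw [← ih]
    _ = (A - K * C) ^ (τ + 1)
        + (∑ k ∈ Finset.range τ, (A - K * C) ^ (τ - k) * ((K * C) * A ^ k)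
            + (K * C) * A ^ τ) := by
        rw [mul_add, Finset.mul_sum, pow_succ', add_assoc]
        congr 2
        apply Finset.sum_congr rfl
        intro k hk
        have hk' : k < τ := Finset.mem_range.mp hk
        have h5 : τ - k = (τ - 1 - k) + 1 := by omega
        rw [h5, pow_succ', mul_assoc]
    _ = (A - K * C) ^ (τ + 1)
        + ∑ k ∈ Finset.range (τ + 1), (A - K * C) ^ (τ + 1 - 1 - k) * ((K * C) * A ^ k) := by
        have hS : (∑ k ∈ Finset.range τ, (A - K * C) ^ (τ + 1 - 1 - k) * ((K * C) * A ^ k))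
            = ∑ k ∈ Finset.range τ, (A - K * C) ^ (τ - k) * ((K * C) * A ^ k) := by
          apply Finset.sum_congr rfl
          intro k hk
          have h6 : τ + 1 - 1 - k = τ - k := by omega
          rw [h6]
        have h7 : τ + 1 - 1 - τ = 0 := by omega
        rw [Finset.sum_range_succ, hS, h7, pow_zero, one_mul]

theorem detectable_implies_eUOSS'
    {n p : ℕ} (A : Matrix (Fin n) (Fin n) ℝ) (C : Matrix (Fin p) (Fin n) ℝ)
    (hdet : ∃ K : Matrix (Fin n) (Fin p) ℝ,
      ∀ μ ∈ spectrum ℂ ((A - K * C).map (algebraMap ℝ ℂ)), ‖μ‖ < 1) :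
    ∃ (cbeta lambeta cgamma : ℝ), 1 ≤ cbeta ∧ lambeta ∈ Set.Ioo (0 : ℝ) 1 ∧ 0 < cgamma ∧
      ∀ (e : Fin n → ℝ) (τ : ℕ),
        _root_.enorm ((A ^ τ).mulVec e) ≤
          max (cbeta * lambeta ^ τ * _root_.enorm e)
            (cgamma * maxUpTo τ (fun k => _root_.enorm (C.mulVec ((A ^ k).mulVec e)))) := by
  obtain ⟨K, hK⟩ := hdet
  set M : Matrix (Fin n) (Fin n) ℝ := A - K * C with hMdef
  obtain ⟨c, lam, hc1, ⟨hlam0, hlam1⟩, hpow⟩ := aux_pow_bound (M.map (algebraMap ℝ ℂ)) hK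
  have hcpos : (0:ℝ) < c := lt_of_lt_of_le one_pos hc1
  -- real power norm bound
  have hMt : ∀ t : ℕ, ‖M ^ t‖ ≤ c * lam ^ t := by
    intro t
    have h1 : (M ^ t).map (algebraMap ℝ ℂ) = (M.map (algebraMap ℝ ℂ)) ^ t := by
      have := map_pow ((algebraMap ℝ ℂ).mapMatrix) M t
      simpa [RingHom.mapMatrix_apply] using this
    have := hpow t
    rw [← h1, norm_map_complex] at this
    exact this
  set sn : ℝ := Real.sqrt n with hsn
  have hsn0 : 0 ≤ sn := Real.sqrt_nonneg _
  set cb : ℝ := max 1 (2 * sn * c) with hcb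
  set cg : ℝ := 2 * (sn * sn * c * ‖K‖ / (1 - lam)) + 1 with hcg
  have h1lam : (0:ℝ) < 1 - lam := by linarith
  have hcg0 : 0 < cg := by
    have : 0 ≤ sn * sn * c * ‖K‖ / (1 - lam) := by positivity
    simp only [hcg]; linarith
  refine ⟨cb, lam, cg, le_max_left _ _, ⟨hlam0, hlam1⟩, hcg0, ?_⟩
  intro e τ
  set Y : ℝ := maxUpTo τ (fun k => _root_.enorm (C.mulVec ((A ^ k).mulVec e))) with hY
  have hY0 : 0 ≤ Y := maxUpTo_nonneg _ _
  -- decomposition applied to e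
  have hdec : (A ^ τ).mulVec e = (M ^ τ).mulVec e
      + ∑ k ∈ Finset.range τ,
          (M ^ (τ - 1 - k)).mulVec ((K * C * A ^ k).mulVec e) := by
    rw [decomp A K C τ]
    rw [Matrix.add_mulVec, sum_mulVec']
    congr 1
    apply Finset.sum_congr rfl
    intro k _
    rw [← Matrix.mulVec_mulVec]
  -- term bounds
  have hterm : ∀ k ∈ Finset.range τ,
      _root_.enorm ((M ^ (τ - 1 - k)).mulVec ((K * C * A ^ k).mulVec e))
        ≤ sn * sn * c * ‖K‖ * lam ^ (τ - 1 - k) * Y := by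
    intro k hk
    have hCk : _root_.enorm (C.mulVec ((A ^ k).mulVec e)) ≤ Y := le_maxUpTo τ (fun k => _root_.enorm (C.mulVec ((A ^ k).mulVec e))) k hk
    have h2 : (K * C * A ^ k).mulVec e = K.mulVec (C.mulVec ((A ^ k).mulVec e)) := by
      rw [Matrix.mulVec_mulVec, Matrix.mulVec_mulVec]
    rw [h2]
    calc _root_.enorm ((M ^ (τ - 1 - k)).mulVec (K.mulVec (C.mulVec ((A ^ k).mulVec e))))
        ≤ sn * (‖M ^ (τ - 1 - k)‖ * _root_.enorm (K.mulVec (C.mulVec ((A ^ k).mulVec e)))) :=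
          enorm_mulVec_le _ _
      _ ≤ sn * (‖M ^ (τ - 1 - k)‖ * (sn * (‖K‖ * Y))) := by
          refine mul_le_mul_of_nonneg_left (mul_le_mul_of_nonneg_left ?_ (norm_nonneg _)) hsn0
          refine (enorm_mulVec_le _ _).trans ?_
          exact mul_le_mul_of_nonneg_left
            (mul_le_mul_of_nonneg_left hCk (norm_nonneg _)) hsn0
      _ ≤ sn * ((c * lam ^ (τ - 1 - k)) * (sn * (‖K‖ * Y))) := by
          refine mul_le_mul_of_nonneg_left (mul_le_mul_of_nonneg_right (hMt _) ?_) hsn0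
          positivity
      _ = sn * sn * c * ‖K‖ * lam ^ (τ - 1 - k) * Y := by ring
  -- geometric sum bound
  have hgeom : ∑ k ∈ Finset.range τ, lam ^ (τ - 1 - k) ≤ 1 / (1 - lam) := by
    rw [Finset.sum_range_reflect (fun j => lam ^ j) τ]
    have hne : lam ≠ 1 := ne_of_lt hlam1
    rw [geom_sum_eq hne]
    have h8 : (lam ^ τ - 1) / (lam - 1) = (1 - lam ^ τ) / (1 - lam) := by
      rw [← neg_div_neg_eq]; ring_nf
    rw [h8]
    have hlt : (0:ℝ) ≤ lam ^ τ := by positivity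
    gcongr
    linarith
  -- put it together
  have hmain : _root_.enorm ((A ^ τ).mulVec e)
      ≤ sn * c * lam ^ τ * _root_.enorm e + sn * sn * c * ‖K‖ / (1 - lam) * Y := by
    rw [hdec]
    refine (enorm_add_le' _ _).trans ?_
    have hT1 : _root_.enorm ((M ^ τ).mulVec e) ≤ sn * c * lam ^ τ * _root_.enorm e := by
      refine (enorm_mulVec_le _ _).trans ?_
      have := mul_le_mul_of_nonneg_right (hMt τ) (enorm_nonneg e)
      calc sn * (‖M ^ τ‖ * _root_.enorm e) ≤ sn * (c * lam ^ τ * _root_.enorm e) :=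
            mul_le_mul_of_nonneg_left this hsn0
        _ = sn * c * lam ^ τ * _root_.enorm e := by ring
    have hT2 : _root_.enorm (∑ k ∈ Finset.range τ,
          (M ^ (τ - 1 - k)).mulVec ((K * C * A ^ k).mulVec e))
        ≤ sn * sn * c * ‖K‖ / (1 - lam) * Y := by
      refine (enorm_sum_le' _ _).trans ?_
      refine le_trans (Finset.sum_le_sum hterm) ?_
      rw [← Finset.sum_mul]
      have h3 : ∑ k ∈ Finset.range τ, sn * sn * c * ‖K‖ * lam ^ (τ - 1 - k)
          = sn * sn * c * ‖K‖ * ∑ k ∈ Finset.range τ, lam ^ (τ - 1 - k) := by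
        rw [Finset.mul_sum]
      rw [h3]
      refine mul_le_mul_of_nonneg_right ?_ hY0
      calc sn * sn * c * ‖K‖ * ∑ k ∈ Finset.range τ, lam ^ (τ - 1 - k)
          ≤ sn * sn * c * ‖K‖ * (1 / (1 - lam)) :=
            mul_le_mul_of_nonneg_left hgeom (by positivity)
        _ = sn * sn * c * ‖K‖ / (1 - lam) := by ring
    linarith
  -- a + b ≤ 2 max a b ≤ max (cb ...) (cg ...)
  set a : ℝ := sn * c * lam ^ τ * _root_.enorm e
  set b : ℝ := sn * sn * c * ‖K‖ / (1 - lam) * Y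
  have hab : a + b ≤ max (2 * a) (2 * b) := by
    rcases le_total a b with h | h
    · refine le_trans ?_ (le_max_right _ _); linarith
    · refine le_trans ?_ (le_max_left _ _); linarith
  refine hmain.trans (hab.trans (max_le_max ?_ ?_))
  · have : 2 * a = (2 * sn * c) * lam ^ τ * _root_.enorm e := by ring
    rw [this]
    refine mul_le_mul_of_nonneg_right (mul_le_mul_of_nonneg_right ?_ ?_) (enorm_nonneg _)
    · exact le_max_right _ _
    · positivity
  · have : 2 * b = (2 * (sn * sn * c * ‖K‖ / (1 - lam))) * Y := by ring
    rw [this]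
    refine mul_le_mul_of_nonneg_right ?_ hY0
    simp only [hcg]; linarith

end Aux

/-- Incremental exponential uniform output-to-state stability (e-UOSS) with a
linear gain for detectable linear systems. -/
theorem detectable_implies_eUOSS
    {n p : ℕ} (A : Matrix (Fin n) (Fin n) ℝ) (C : Matrix (Fin p) (Fin n) ℝ)
    -- (A,C) detectable: there is K with spectral radius of A - K*C < 1
    (hdet : ∃ K : Matrix (Fin n) (Fin p) ℝ,
      ∀ μ ∈ spectrum ℂ ((A - K * C).map (algebraMap ℝ ℂ)), ‖μ‖ < 1) :
    ∃ (cbeta lambeta cgamma : ℝ), 1 ≤ cbeta ∧ lambeta ∈ Set.Ioo (0 : ℝ) 1 ∧ 0 < cgamma ∧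
      ∀ (e : Fin n → ℝ) (τ : ℕ),
        _root_.enorm ((A ^ τ).mulVec e) ≤
          max (cbeta * lambeta ^ τ * _root_.enorm e)
            (cgamma * maxUpTo τ (fun k => enorm (C.mulVec ((A ^ k).mulVec e)))) :=
  detectable_implies_eUOSS' A C hdet
end
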